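/- Monotone Convergence Theorem for compact-line Kurzweil–Stieltjes integrals: let K be a compact line and G : K → ℝ a nondecreasing, positive, amenable function. Let (f_m) be a monotone sequence of G-integrable functions converging pointwise G-almost everywhere to f : K → ℝ. If (∫_K f_m dG)_m converges in ℝ, then f is G-integrable and lim_m ∫_K f_m dG = ∫_K f dG. -/

import Mathlib

/-!
For an increasing sequence converging everywhere, fix `ε`, an index `k₀` after which the integrals
are `ε`-close to `L`, and gauges `δ k` for which the Riemann sums of `f k` are
`ε / 2 ^ (k + 1)`-close to its integral. Each point `x` gets an index `m x ≥ k₀` with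
`|f (m x) x - g x| ≤ ε`, and the gauge `δ (m x) x`. On a fine partition the Riemann sum of `g` is
then `ε G(⊤)`-close to that of the diagonal function `x ↦ f (m x) x`. Grouping the cells by the
index of their tag, the Saks–Henstock lemma makes the latter `ε`-close to the sum of the integrals
of `f (m t)` over the cells, and by monotonicity this sum lies between the integrals of `f k₀`
and `f M` for a large `M`.

A function vanishing outside a `G`-null set has integral `0`: cover the points where
`|φ| ≤ k + 1` by intervals of measure at most `ε / ((k + 1) 2 ^ (k + 1))`. Modifying the `f m`
and `g` on the exceptional null set therefore reduces convergence almost everywhere to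
convergence everywhere, and the decreasing case follows by negation.
-/

open Set Filter MeasureTheory

/-- A tagged partition of the interval `[a,b]` in a linear order `K`. -/
structure TaggedPartition (K : Type*) [LinearOrder K] (a b : K) where
  n : ℕ
  x : ℕ → K
  t : ℕ → K
  x_zero : x 0 = a
  x_last : x n = b
  mono : ∀ i < n, x i ≤ x (i + 1)
  tag_mem : ∀ i < n, t (i + 1) ∈ Set.Icc (x i) (x (i + 1))

/-- A gauge on the interval `[a,b]` of `K`: each point of `[a,b]` is assigned a
relatively open subinterval of `[a,b]` containing it. -/
def IsGauge (K : Type*) [LinearOrder K] [TopologicalSpace K] (a b : K) (δ : K → Set K) : Prop :=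
  ∀ x ∈ Set.Icc a b, x ∈ δ x ∧ (δ x).OrdConnected ∧ ∃ U, IsOpen U ∧ δ x = U ∩ Set.Icc a b

/-- A tagged partition is `δ`-fine when `(x_{i-1}, x_i] ⊆ δ(t_i)` for all `i`. -/
def TaggedPartition.IsFine {K : Type*} [LinearOrder K] {a b : K}
    (P : TaggedPartition K a b) (δ : K → Set K) : Prop :=
  ∀ i < P.n, Set.Ioc (P.x i) (P.x (i + 1)) ⊆ δ (P.t (i + 1))

/-- The Riemann sum `S(f,G,P) = f(a)G(a) + Σ f(t_i)(G(x_i) - G(x_{i-1}))`. -/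
noncomputable def riemannSum {K : Type*} [LinearOrder K] {a b : K}
    (f G : K → ℝ) (P : TaggedPartition K a b) : ℝ :=
  f a * G a + ∑ i ∈ Finset.range P.n, f (P.t (i + 1)) * (G (P.x (i + 1)) - G (P.x i))

/-- `f` has Kurzweil–Stieltjes integral `A` with respect to `G` over `[a,b]`. -/
def HasIntegral {K : Type*} [LinearOrder K] [TopologicalSpace K]
    (f G : K → ℝ) (a b : K) (A : ℝ) : Prop :=
  ∀ ε : ℝ, 0 < ε → ∃ δ : K → Set K, IsGauge K a b δ ∧
    ∀ P : TaggedPartition K a b, P.IsFine δ → |riemannSum f G P - A| < ε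

/-- `G` is amenable: right-continuous everywhere, and regulated (left limits exist at
left-dense points, right limits at right-dense points). -/
def Amenable {K : Type*} [LinearOrder K] [TopologicalSpace K] [BoundedOrder K]
    (G : K → ℝ) : Prop :=
  (∀ x : K, ContinuousWithinAt G (Set.Ici x) x) ∧
  (∀ x : K, x ≠ ⊥ → (¬ ∃ y, y ⋖ x) → ∃ l, Filter.Tendsto G (nhdsWithin x (Set.Iio x)) (nhds l)) ∧
  (∀ x : K, x ≠ ⊤ → (¬ ∃ y, x ⋖ y) → ∃ l, Filter.Tendsto G (nhdsWithin x (Set.Ioi x)) (nhds l))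

open Classical in
/-- `L_G(x)`: `0` at the least element, `G` of the immediate predecessor if `x` is
left-isolated, and the left limit of `G` at `x` if `x` is left-dense. -/
noncomputable def Lfun {K : Type*} [LinearOrder K] [TopologicalSpace K] [BoundedOrder K]
    (G : K → ℝ) (x : K) : ℝ :=
  if x = ⊥ then 0
  else if h : ∃ y, y ⋖ x then G h.choose
  else Function.leftLim G x

/-- The set of variation sums of `G` over divisions of `[a,b]`. -/
def varSums {K : Type*} [LinearOrder K] (G : K → ℝ) (a b : K) : Set ℝ :=
  {v | ∃ (n : ℕ) (x : ℕ → K), x 0 = a ∧ x n = b ∧ (∀ i < n, x i ≤ x (i + 1)) ∧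
        v = ∑ i ∈ Finset.range n, |G (x (i + 1)) - G (x i)|}

/-- `S` is null for the outer measure induced by `μ` via covers by countably many
open intervals. -/
def GNull {K : Type*} [LinearOrder K] [TopologicalSpace K] [MeasurableSpace K]
    (μ : MeasureTheory.Measure K) (S : Set K) : Prop :=
  ∀ ε : ℝ, 0 < ε → ∃ I : ℕ → Set K, (∀ n, IsOpen (I n) ∧ (I n).OrdConnected) ∧
    S ⊆ ⋃ n, I n ∧ ∑' n, μ (I n) < ENNReal.ofReal ε

open Topology

namespace TaggedPartition

variable {K : Type*} [LinearOrder K] {a b c : K}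

theorem x_mono (P : TaggedPartition K a b) {i j : ℕ} (hij : i ≤ j) (hj : j ≤ P.n) :
    P.x i ≤ P.x j := by
  induction j, hij using Nat.le_induction with
  | base => rfl
  | succ j _ ih => exact (ih (by omega)).trans (P.mono j (by omega))

theorem x_mem_Icc (P : TaggedPartition K a b) {i : ℕ} (hi : i ≤ P.n) : P.x i ∈ Icc a b := by
  constructor
  · simpa [P.x_zero] using P.x_mono (Nat.zero_le i) hi
  · simpa [P.x_last] using P.x_mono hi le_rfl

theorem le (P : TaggedPartition K a b) : a ≤ b :=
  P.x_zero ▸ (P.x_mem_Icc (Nat.zero_le _)).2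

theorem disjoint_Ioc (P : TaggedPartition K a b) {i j : ℕ} (hi : i < P.n) (hj : j < P.n)
    (hij : i ≠ j) : Disjoint (Ioc (P.x i) (P.x (i + 1))) (Ioc (P.x j) (P.x (j + 1))) := by
  rcases hij.lt_or_gt with h | h
  · exact Ioc_disjoint_Ioc_of_le (P.x_mono h hj.le)
  · exact (Ioc_disjoint_Ioc_of_le (P.x_mono h hi.le)).symm

theorem sum_sub (P : TaggedPartition K a b) (G : K → ℝ) :
    ∑ i ∈ Finset.range P.n, (G (P.x (i + 1)) - G (P.x i)) = G b - G a := by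
  rw [Finset.sum_range_sub (fun i => G (P.x i)), P.x_last, P.x_zero]

def refl (a : K) : TaggedPartition K a a where
  n := 0
  x _ := a
  t _ := a
  x_zero := rfl
  x_last := rfl
  mono := by simp
  tag_mem := by simp

def single (a b t : K) (hab : a ≤ b) (ht : t ∈ Icc a b) : TaggedPartition K a b where
  n := 1
  x i := if i = 0 then a else b
  t _ := t
  x_zero := rfl
  x_last := rfl
  mono := by intro i hi; interval_cases i; simpa using hab
  tag_mem := by intro i hi; interval_cases i; simpa using ht

section Append

variable (P : TaggedPartition K a b) (Q : TaggedPartition K b c)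

def append : TaggedPartition K a c where
  n := P.n + Q.n
  x i := if i ≤ P.n then P.x i else Q.x (i - P.n)
  t i := if i ≤ P.n then P.t i else Q.t (i - P.n)
  x_zero := by simp [P.x_zero]
  x_last := by
    rcases Q.n.eq_zero_or_pos with h | h
    · simpa [h, P.x_last, ← Q.x_zero] using Q.x_last
    · simp [show ¬ P.n + Q.n ≤ P.n by omega, Q.x_last]
  mono := by
    intro i hi
    by_cases h : i + 1 ≤ P.n
    · simpa [h, show i ≤ P.n by omega] using P.mono i h
    by_cases h' : i = P.n
    · subst h'
      simpa [P.x_last, ← Q.x_zero] using Q.mono 0 (by omega)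
    · simpa [h, show ¬ i ≤ P.n by omega, show i + 1 - P.n = i - P.n + 1 by omega]
        using Q.mono (i - P.n) (by omega)
  tag_mem := by
    intro i hi
    by_cases h : i + 1 ≤ P.n
    · simpa [h, show i ≤ P.n by omega] using P.tag_mem i h
    by_cases h' : i = P.n
    · subst h'
      simpa [h, P.x_last, ← Q.x_zero] using Q.tag_mem 0 (by omega)
    · simpa [h, show ¬ i ≤ P.n by omega, show i + 1 - P.n = i - P.n + 1 by omega]
        using Q.tag_mem (i - P.n) (by omega)

end Append

theorem IsFine.mono {P : TaggedPartition K a b} {δ δ' : K → Set K} (h : P.IsFine δ)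
    (hδ : ∀ x, δ x ⊆ δ' x) : P.IsFine δ' :=
  fun i hi => (h i hi).trans (hδ _)

theorem refl_isFine (δ : K → Set K) : (refl a).IsFine δ := by
  intro i hi; simp [refl] at hi

theorem single_isFine {t : K} (hab : a ≤ b) (ht : t ∈ Icc a b) {δ : K → Set K}
    (h : Ioc a b ⊆ δ t) : (single a b t hab ht).IsFine δ := by
  intro i hi
  obtain rfl : i = 0 := by simpa [single] using hi
  simpa [single] using h

theorem append_isFine {P : TaggedPartition K a b} {Q : TaggedPartition K b c}
    {δ : K → Set K} (hP : P.IsFine δ) (hQ : Q.IsFine δ) : (P.append Q).IsFine δ := by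
  intro i hi
  by_cases h : i + 1 ≤ P.n
  · simpa [append, h, show i ≤ P.n by omega] using hP i h
  by_cases h' : i = P.n
  · subst h'
    simpa [append, P.x_last, ← Q.x_zero] using hQ 0 (by simp [append] at hi; omega)
  · simpa [append, h, show ¬ i ≤ P.n by omega, show i + 1 - P.n = i - P.n + 1 by omega]
      using hQ (i - P.n) (by simp [append] at hi; omega)

theorem exists_isFine_append_single {δ : K → Set K} {y z τ : K} (P : TaggedPartition K a y)
    (hP : P.IsFine δ) (hyz : y ≤ z) (hτ : τ ∈ Icc y z) (h : Ioc y z ⊆ δ τ) :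
    ∃ Q : TaggedPartition K a z, Q.IsFine δ :=
  ⟨P.append (single y z τ hyz hτ), append_isFine hP (single_isFine hyz hτ h)⟩

end TaggedPartition

section RiemannSum

variable {K : Type*} [LinearOrder K] {a b c : K} {f f' G : K → ℝ}

theorem riemannSum_single {t : K} (hab : a ≤ b) (ht : t ∈ Icc a b) :
    riemannSum f G (TaggedPartition.single a b t hab ht) = f a * G a + f t * (G b - G a) := by
  simp [riemannSum, TaggedPartition.single]

theorem riemannSum_append (P : TaggedPartition K a b) (Q : TaggedPartition K b c) :
    riemannSum f G (P.append Q) = riemannSum f G P + riemannSum f G Q - f b * G b := by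
  set R := P.append Q
  have hP : ∀ i ∈ Finset.range P.n, f (R.t (i + 1)) * (G (R.x (i + 1)) - G (R.x i)) =
      f (P.t (i + 1)) * (G (P.x (i + 1)) - G (P.x i)) := fun i hi => by
    rw [Finset.mem_range] at hi
    simp [R, TaggedPartition.append, show i + 1 ≤ P.n by omega, show i ≤ P.n by omega]
  have hQ : ∀ i ∈ Finset.range Q.n,
      f (R.t (P.n + i + 1)) * (G (R.x (P.n + i + 1)) - G (R.x (P.n + i))) =
      f (Q.t (i + 1)) * (G (Q.x (i + 1)) - G (Q.x i)) := fun i _ => by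
    rcases i.eq_zero_or_pos with rfl | hi
    · simp [R, TaggedPartition.append, P.x_last, ← Q.x_zero]
    · simp [R, TaggedPartition.append, show ¬ P.n + i ≤ P.n by omega, Nat.add_assoc]
  rw [riemannSum, show R.n = P.n + Q.n from rfl, Finset.sum_range_add, Finset.sum_congr rfl hP,
    Finset.sum_congr rfl hQ, riemannSum, riemannSum]
  ring

theorem riemannSum_of_self (P : TaggedPartition K a a) : riemannSum f G P = f a * G a := by
  have hx : ∀ i ≤ P.n, P.x i = a := fun i hi => by simpa using P.x_mem_Icc hi
  rw [riemannSum, add_eq_left]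
  refine Finset.sum_eq_zero fun i hi => ?_
  rw [hx (i + 1) (Finset.mem_range.1 hi), hx i (Finset.mem_range.1 hi).le, sub_self, mul_zero]

theorem riemannSum_add (P : TaggedPartition K a b) :
    riemannSum (f + f') G P = riemannSum f G P + riemannSum f' G P := by
  simp only [riemannSum, Pi.add_apply, add_mul, Finset.sum_add_distrib]
  ring

theorem riemannSum_neg (P : TaggedPartition K a b) :
    riemannSum (-f) G P = -riemannSum f G P := by
  simp only [riemannSum, Pi.neg_apply, neg_mul, Finset.sum_neg_distrib]
  ring

theorem riemannSum_sub (P : TaggedPartition K a b) :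
    riemannSum (f - f') G P = riemannSum f G P - riemannSum f' G P := by
  simp only [riemannSum, Pi.sub_apply, sub_mul, Finset.sum_sub_distrib]
  ring

theorem riemannSum_sub_mul_le (hff' : ∀ x, f x ≤ f' x) (hG : Monotone G)
    (P : TaggedPartition K a b) :
    riemannSum f G P - f a * G a ≤ riemannSum f' G P - f' a * G a := by
  simp only [riemannSum, add_sub_cancel_left]
  refine Finset.sum_le_sum fun i hi => ?_
  exact mul_le_mul_of_nonneg_right (hff' _)
    (sub_nonneg.2 (hG (P.mono i (Finset.mem_range.1 hi))))

theorem abs_riemannSum_le (hG : Monotone G) (hGa : 0 ≤ G a) (P : TaggedPartition K a b) :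
    |riemannSum f G P| ≤
      |f a| * G a + ∑ i ∈ Finset.range P.n, |f (P.t (i + 1))| * (G (P.x (i + 1)) - G (P.x i)) := by
  refine (abs_add_le _ _).trans (add_le_add (by rw [abs_mul, abs_of_nonneg hGa])
    ((Finset.abs_sum_le_sum_abs _ _).trans (Finset.sum_le_sum fun i hi => ?_)))
  rw [abs_mul, abs_of_nonneg (sub_nonneg.2 (hG (P.mono i (Finset.mem_range.1 hi))))]

theorem abs_riemannSum_sub_le {ε : ℝ} (hff' : ∀ x, |f x - f' x| ≤ ε) (hG : Monotone G)
    (hGa : 0 ≤ G a) (P : TaggedPartition K a b) :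
    |riemannSum f G P - riemannSum f' G P| ≤ ε * G b := by
  rw [← riemannSum_sub]
  refine (abs_riemannSum_le hG hGa P).trans ?_
  calc _ ≤ ε * G a + ∑ i ∈ Finset.range P.n, ε * (G (P.x (i + 1)) - G (P.x i)) := by
        gcongr with i hi
        · exact hff' a
        · exact sub_nonneg.2 (hG (P.mono i (Finset.mem_range.1 hi)))
        · exact hff' _
    _ = ε * G b := by rw [← Finset.mul_sum, P.sum_sub]; ring

theorem exists_isFine_riemannSum_eq {x : ℕ → K} {n : ℕ} {δ : K → Set K} {c : ℕ → ℝ}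
    (h : ∀ i < n, ∃ Q : TaggedPartition K (x i) (x (i + 1)), Q.IsFine δ ∧
      riemannSum f G Q = f (x i) * G (x i) + c i) :
    ∃ R : TaggedPartition K (x 0) (x n), R.IsFine δ ∧
      riemannSum f G R = f (x 0) * G (x 0) + ∑ i ∈ Finset.range n, c i := by
  induction n with
  | zero =>
    exact ⟨.refl _, TaggedPartition.refl_isFine δ, by simp [riemannSum, TaggedPartition.refl]⟩
  | succ n ih =>
    obtain ⟨R, hR, hRs⟩ := ih fun i hi => h i (by omega)
    obtain ⟨Q, hQ, hQs⟩ := h n (by omega)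
    refine ⟨R.append Q, TaggedPartition.append_isFine hR hQ, ?_⟩
    rw [riemannSum_append, hRs, hQs, Finset.sum_range_succ]
    ring

end RiemannSum

section Gauge

variable {K : Type*} [LinearOrder K] [TopologicalSpace K] {a b : K} {f G : K → ℝ} {A : ℝ}

theorem isGauge_Icc : IsGauge K a b fun _ => Icc a b :=
  fun _ hx => ⟨hx, ordConnected_Icc, univ, isOpen_univ, (univ_inter _).symm⟩

theorem IsGauge.inter {δ δ' : K → Set K} (h : IsGauge K a b δ) (h' : IsGauge K a b δ') :
    IsGauge K a b fun x => δ x ∩ δ' x := by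
  intro x hx
  obtain ⟨hx₁, hδ, U, hU, hUδ⟩ := h x hx
  obtain ⟨hx₂, hδ', U', hU', hU'δ'⟩ := h' x hx
  refine ⟨⟨hx₁, hx₂⟩, hδ.inter hδ', U ∩ U', hU.inter hU', ?_⟩
  rw [inter_inter_distrib_right, ← hUδ, ← hU'δ']

theorem IsGauge.restrict {δ : K → Set K} (h : IsGauge K a b δ) {a' b' : K} (ha : a ≤ a')
    (hb : b' ≤ b) : IsGauge K a' b' fun x => δ x ∩ Icc a' b' := by
  intro x hx
  obtain ⟨hxδ, hδ, U, hU, hUδ⟩ := h x ⟨ha.trans hx.1, hx.2.trans hb⟩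
  refine ⟨⟨hxδ, hx⟩, hδ.inter ordConnected_Icc, U, hU, ?_⟩
  change δ x ∩ Icc a' b' = _
  rw [hUδ, inter_assoc, Icc_inter_Icc, max_eq_right ha, min_eq_right hb]

variable (K) in
def fineFilter (a b : K) : Filter (TaggedPartition K a b) :=
  ⨅ (δ : K → Set K) (_ : IsGauge K a b δ), 𝓟 {P | P.IsFine δ}

theorem hasBasis_fineFilter :
    (fineFilter K a b).HasBasis (IsGauge K a b) fun δ => {P | P.IsFine δ} :=
  hasBasis_biInf_principal'
    (fun _ hδ _ hδ' => ⟨_, hδ.inter hδ',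
      fun P (hP : P.IsFine _) => hP.mono fun _ => inter_subset_left,
      fun P (hP : P.IsFine _) => hP.mono fun _ => inter_subset_right⟩) ⟨_, isGauge_Icc⟩

theorem eventually_isFine {δ : K → Set K} (hδ : IsGauge K a b δ) :
    ∀ᶠ P in fineFilter K a b, P.IsFine δ :=
  hasBasis_fineFilter.mem_of_mem hδ

theorem hasIntegral_iff_tendsto :
    HasIntegral f G a b A ↔ Tendsto (riemannSum f G) (fineFilter K a b) (𝓝 A) := by
  rw [hasBasis_fineFilter.tendsto_iff Metric.nhds_basis_ball]
  simp only [HasIntegral, mem_ofPred_eq, Metric.mem_ball, Real.dist_eq]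

theorem hasIntegral_self : HasIntegral f G a a (f a * G a) :=
  fun ε hε => ⟨_, isGauge_Icc, fun P _ => by simpa [riemannSum_of_self] using hε⟩

theorem HasIntegral.add {f' : K → ℝ} {A' : ℝ} (h : HasIntegral f G a b A)
    (h' : HasIntegral f' G a b A') : HasIntegral (f + f') G a b (A + A') := by
  rw [hasIntegral_iff_tendsto] at *
  exact (h.add h').congr fun P => (riemannSum_add P).symm

theorem HasIntegral.neg (h : HasIntegral f G a b A) : HasIntegral (-f) G a b (-A) := by
  rw [hasIntegral_iff_tendsto] at *
  exact h.neg.congr fun P => (riemannSum_neg P).symm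

theorem hasIntegral_of_forall_le_mul (C : ℝ)
    (h : ∀ ε > 0, ∃ δ, IsGauge K a b δ ∧
      ∀ P : TaggedPartition K a b, P.IsFine δ → |riemannSum f G P - A| ≤ C * ε) :
    HasIntegral f G a b A := by
  intro ε hε
  obtain ⟨δ, hδ, hP⟩ := h (ε / (|C| + 1)) (by positivity)
  refine ⟨δ, hδ, fun P hPf => (hP P hPf).trans_lt ?_⟩
  calc C * (ε / (|C| + 1)) ≤ |C| * (ε / (|C| + 1)) := by gcongr; exact le_abs_self C
    _ < ε := by
      rw [← mul_div_assoc, div_lt_iff₀ (by positivity)]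
      linarith

end Gauge

section Cousin

variable {K : Type*} [LinearOrder K] [TopologicalSpace K] [OrderTopology K] [CompactSpace K]
  {a b : K} {δ : K → Set K}

/-- Cousin's lemma. -/
theorem exists_isFine (hab : a ≤ b) (hδ : IsGauge K a b δ) :
    ∃ P : TaggedPartition K a b, P.IsFine δ := by
  set s := {y ∈ Icc a b | ∃ P : TaggedPartition K a y, P.IsFine δ}
  have has : a ∈ s := ⟨left_mem_Icc.2 hab, .refl a, TaggedPartition.refl_isFine δ⟩
  obtain ⟨c, hcs, hc⟩ := isClosed_closure.isCompact.exists_isGreatest ⟨a, subset_closure has⟩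
  have hcub : c ∈ upperBounds s := upperBounds_closure s ▸ hc
  have hcI : c ∈ Icc a b := closure_minimal (fun y hy => hy.1) isClosed_Icc hcs
  obtain ⟨hcδ, hco, U, hU, hUδ⟩ := hδ c hcI
  have hcU : c ∈ U := (hUδ ▸ hcδ).1
  have hUδc : ∀ y ∈ U, y ∈ Icc a b → y ∈ δ c := fun y hy hy' => hUδ ▸ ⟨hy, hy'⟩
  -- a point `y ∈ s` close to `c` is joined to `c` by the cell `(y, c]` tagged at `c`
  obtain ⟨P, hP⟩ : ∃ P : TaggedPartition K a c, P.IsFine δ := by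
    obtain ⟨y, hyU, hyI, Q, hQ⟩ := mem_closure_iff.1 hcs U hU hcU
    have hyc : y ≤ c := hcub ⟨hyI, Q, hQ⟩
    exact TaggedPartition.exists_isFine_append_single Q hQ hyc ⟨hyc, le_rfl⟩
      (Ioc_subset_Icc_self.trans (hco.out (hUδc y hyU hyI) hcδ))
  rcases hcI.2.eq_or_lt with rfl | hcb
  · exact ⟨P, hP⟩
  -- if `c < b`, a further cell `(c, z]` can be attached, contradicting the maximality of `c`
  obtain ⟨z, hcz, hzb, τ, hτ, hzδ⟩ : ∃ z, c < z ∧ z ≤ b ∧ ∃ τ ∈ Icc c z, Ioc c z ⊆ δ τ := by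
    by_cases hcov : ∃ d, c ⋖ d
    · obtain ⟨d, hd⟩ := hcov
      have hdb : d ≤ b := hd.ge_of_gt hcb
      refine ⟨d, hd.lt, hdb, d, ⟨hd.lt.le, le_rfl⟩, ?_⟩
      rw [hd.Ioc_eq, singleton_subset_iff]
      exact (hδ d ⟨hcI.1.trans hd.lt.le, hdb⟩).1
    · have : (𝓝[>] c).NeBot :=
        ⟨fun h => (nhdsGT_eq_bot_iff.1 h).elim (fun h => (h b).not_gt hcb) hcov⟩
      obtain ⟨z, hcz, hzU, hzb⟩ := ((eventually_mem_nhdsWithin (s := Ioi c)).and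
        (eventually_nhdsWithin_of_eventually_nhds
          ((hU.eventually_mem hcU).and (eventually_lt_nhds hcb)))).exists
      refine ⟨z, hcz, hzb.le, c, ⟨le_rfl, hcz.le⟩, ?_⟩
      exact Ioc_subset_Icc_self.trans
        (hco.out hcδ (hUδc z hzU ⟨hcI.1.trans hcz.le, hzb.le⟩))
  obtain ⟨Q, hQ⟩ := TaggedPartition.exists_isFine_append_single P hP hcz.le hτ hzδ
  exact ((hcub ⟨⟨hcI.1.trans hcz.le, hzb⟩, Q, hQ⟩).not_gt hcz).elim

theorem fineFilter_neBot (hab : a ≤ b) : (fineFilter K a b).NeBot :=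
  hasBasis_fineFilter.neBot_iff.2 fun hδ => exists_isFine hab hδ

end Cousin

section Integral

variable {K : Type*} [LinearOrder K] [TopologicalSpace K] [OrderTopology K] [CompactSpace K]
  {a b c u v w : K} {f f' G : K → ℝ} {A A' : ℝ}

noncomputable def ksIntegral (f G : K → ℝ) (a b : K) : ℝ :=
  limUnder (fineFilter K a b) (riemannSum f G)

theorem HasIntegral.ksIntegral_eq (hab : a ≤ b) (h : HasIntegral f G a b A) :
    ksIntegral f G a b = A :=
  have := fineFilter_neBot hab
  (hasIntegral_iff_tendsto.1 h).limUnder_eq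

theorem HasIntegral.exists_hasIntegral_of_le (h : HasIntegral f G a b A) (hau : a ≤ u)
    (huv : u ≤ v) (hvb : v ≤ b) : ∃ B, HasIntegral f G u v B := by
  have := fineFilter_neBot huv
  simp only [hasIntegral_iff_tendsto, ← cauchy_map_iff_exists_tendsto]
  refine Metric.cauchy_iff.2 ⟨inferInstance, fun ε hε => ?_⟩
  obtain ⟨δ, hδ, hacc⟩ := h (ε / 2) (half_pos hε)
  obtain ⟨Q₁, hQ₁⟩ := exists_isFine hau (hδ.restrict le_rfl (huv.trans hvb))
  obtain ⟨Q₂, hQ₂⟩ := exists_isFine hvb (hδ.restrict (hau.trans huv) le_rfl)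
  -- partitions of `[u,v]` are compared after completing them by `Q₁` and `Q₂` to `[a,b]`
  have hS : ∀ P : TaggedPartition K u v, P.IsFine (fun x => δ x ∩ Icc u v) →
      |riemannSum f G P + (riemannSum f G Q₁ - f u * G u) + (riemannSum f G Q₂ - f v * G v)
        - A| < ε / 2 := fun P hP => by
    have := hacc ((Q₁.append P).append Q₂) <| TaggedPartition.append_isFine
      (TaggedPartition.append_isFine (hQ₁.mono fun _ => inter_subset_left)
        (hP.mono fun _ => inter_subset_left)) (hQ₂.mono fun _ => inter_subset_left)
    rw [riemannSum_append, riemannSum_append] at this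
    convert this using 2
    ring
  refine ⟨_, image_mem_map (eventually_isFine (hδ.restrict hau hvb)), ?_⟩
  rintro _ ⟨P, hP, rfl⟩ _ ⟨P', hP', rfl⟩
  have h₁ := abs_lt.1 (hS P hP)
  have h₂ := abs_lt.1 (hS P' hP')
  rw [Real.dist_eq, abs_lt]
  constructor <;> linarith

theorem HasIntegral.exists_isFine_abs_riemannSum_sub_le {δ : K → Set K}
    (h : HasIntegral f G a b A) (hδ : IsGauge K a b δ) (hau : a ≤ u) (huv : u ≤ v) (hvb : v ≤ b)
    {η : ℝ} (hη : 0 < η) :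
    ∃ Q : TaggedPartition K u v, Q.IsFine δ ∧ |riemannSum f G Q - ksIntegral f G u v| ≤ η := by
  obtain ⟨B, hB⟩ := h.exists_hasIntegral_of_le hau huv hvb
  have := fineFilter_neBot huv
  obtain ⟨Q, hQδ, hQB⟩ := ((eventually_isFine (hδ.restrict hau hvb)).and
    ((hasIntegral_iff_tendsto.1 hB).eventually (Metric.closedBall_mem_nhds B hη))).exists
  refine ⟨Q, hQδ.mono fun _ => inter_subset_left, ?_⟩
  rwa [hB.ksIntegral_eq huv, ← Real.dist_eq]

theorem HasIntegral.eq_add_sub {A₁ A₂ : ℝ} (hac : a ≤ c) (hcb : c ≤ b)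
    (h : HasIntegral f G a b A) (h₁ : HasIntegral f G a c A₁) (h₂ : HasIntegral f G c b A₂) :
    A = A₁ + A₂ - f c * G c := by
  have := fineFilter_neBot hac
  have := fineFilter_neBot hcb
  have happend : Tendsto (fun P : TaggedPartition K a c × TaggedPartition K c b => P.1.append P.2)
      (fineFilter K a c ×ˢ fineFilter K c b) (fineFilter K a b) :=
    hasBasis_fineFilter.tendsto_right_iff.2 fun δ hδ =>
      ((eventually_isFine (hδ.restrict le_rfl hcb)).prod_mk
        (eventually_isFine (hδ.restrict hac le_rfl))).mono fun P hP =>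
          TaggedPartition.append_isFine (hP.1.mono fun _ => inter_subset_left)
            (hP.2.mono fun _ => inter_subset_left)
  refine tendsto_nhds_unique ((hasIntegral_iff_tendsto.1 h).comp happend) ?_
  refine ((((hasIntegral_iff_tendsto.1 h₁).comp tendsto_fst).add
    ((hasIntegral_iff_tendsto.1 h₂).comp tendsto_snd)).sub_const (f c * G c)).congr fun P => ?_
  exact (riemannSum_append P.1 P.2).symm

/-- `ksIntegral f G u v` contains the atom `f u * G u` at the left endpoint; removing it
gives an interval function that is additive over adjacent intervals. -/
noncomputable def ksIntegralIoc (f G : K → ℝ) (u v : K) : ℝ := ksIntegral f G u v - f u * G u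

theorem HasIntegral.ksIntegralIoc_add (h : HasIntegral f G a b A) (hau : a ≤ u) (huv : u ≤ v)
    (hvw : v ≤ w) (hwb : w ≤ b) :
    ksIntegralIoc f G u v + ksIntegralIoc f G v w = ksIntegralIoc f G u w := by
  obtain ⟨_, h₁⟩ := h.exists_hasIntegral_of_le hau huv (hvw.trans hwb)
  obtain ⟨_, h₂⟩ := h.exists_hasIntegral_of_le (hau.trans huv) hvw hwb
  obtain ⟨_, h₃⟩ := h.exists_hasIntegral_of_le hau (huv.trans hvw) hwb
  simp only [ksIntegralIoc, h₁.ksIntegral_eq huv, h₂.ksIntegral_eq hvw,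
    h₃.ksIntegral_eq (huv.trans hvw), h₃.eq_add_sub huv hvw h₁ h₂]
  ring

theorem HasIntegral.sum_ksIntegralIoc (h : HasIntegral f G a b A) (P : TaggedPartition K a b) :
    ∑ i ∈ Finset.range P.n, ksIntegralIoc f G (P.x i) (P.x (i + 1)) = A - f a * G a := by
  have key : ∀ k ≤ P.n, ∑ i ∈ Finset.range k, ksIntegralIoc f G (P.x i) (P.x (i + 1)) =
      ksIntegralIoc f G a (P.x k) := by
    intro k hk
    induction k with
    | zero => simp [P.x_zero, ksIntegralIoc, hasIntegral_self.ksIntegral_eq le_rfl]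
    | succ k ih =>
      rw [Finset.sum_range_succ, ih (by omega)]
      exact h.ksIntegralIoc_add le_rfl (P.x_mem_Icc (by omega)).1 (P.mono k hk) (P.x_mem_Icc hk).2
  rw [key P.n le_rfl, P.x_last, ksIntegralIoc, h.ksIntegral_eq P.le]

theorem ksIntegralIoc_mono (hff' : ∀ x, f x ≤ f' x) (hG : Monotone G)
    (h : HasIntegral f G a b A) (h' : HasIntegral f' G a b A') (hau : a ≤ u) (huv : u ≤ v)
    (hvb : v ≤ b) : ksIntegralIoc f G u v ≤ ksIntegralIoc f' G u v := by
  have := fineFilter_neBot huv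
  obtain ⟨B, hB⟩ := h.exists_hasIntegral_of_le hau huv hvb
  obtain ⟨B', hB'⟩ := h'.exists_hasIntegral_of_le hau huv hvb
  rw [ksIntegralIoc, ksIntegralIoc, hB.ksIntegral_eq huv, hB'.ksIntegral_eq huv]
  exact le_of_tendsto_of_tendsto' ((hasIntegral_iff_tendsto.1 hB).sub_const _)
    ((hasIntegral_iff_tendsto.1 hB').sub_const _) (riemannSum_sub_mul_le hff' hG)

end Integral

theorem sum_div_two_pow_succ_le {c : ℝ} (hc : 0 ≤ c) (s : Finset ℕ) :
    ∑ k ∈ s, c / 2 ^ (k + 1) ≤ c :=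
  calc ∑ k ∈ s, c / 2 ^ (k + 1) = ∑ k ∈ s, c / 2 / 2 ^ k :=
        Finset.sum_congr rfl fun k _ => by rw [pow_succ]; ring
    _ ≤ ∑' k, c / 2 / 2 ^ k :=
        Summable.sum_le_tsum s (fun k _ => by positivity) (summable_geometric_two' c)
    _ = c := tsum_geometric_two' c

section Henstock

variable {K : Type*} [LinearOrder K] [TopologicalSpace K] [OrderTopology K] [CompactSpace K]
  {a b : K} {f G : K → ℝ} {A ε : ℝ} {δ : K → Set K}

/-- `c i` is the contribution of the `i`-th cell of `P` to the Riemann sum of its refinement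
`R`. -/
theorem HasIntegral.exists_isFine_refinement (h : HasIntegral f G a b A) (hδ : IsGauge K a b δ)
    (P : TaggedPartition K a b) {s : Finset ℕ}
    (hfine : ∀ i ∈ s, Ioc (P.x i) (P.x (i + 1)) ⊆ δ (P.t (i + 1))) {η : ℝ} (hη : 0 < η) :
    ∃ (R : TaggedPartition K a b) (c : ℕ → ℝ), R.IsFine δ ∧
      riemannSum f G R = f a * G a + ∑ i ∈ Finset.range P.n, c i ∧
      (∀ i < P.n, i ∈ s → c i = f (P.t (i + 1)) * (G (P.x (i + 1)) - G (P.x i))) ∧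
      ∀ i < P.n, i ∉ s → |c i - ksIntegralIoc f G (P.x i) (P.x (i + 1))| ≤ η := by
  have hQ : ∀ i < P.n, ∃ c : ℝ, (∃ Q : TaggedPartition K (P.x i) (P.x (i + 1)), Q.IsFine δ ∧
      riemannSum f G Q = f (P.x i) * G (P.x i) + c) ∧
      (i ∈ s → c = f (P.t (i + 1)) * (G (P.x (i + 1)) - G (P.x i))) ∧
      (i ∉ s → |c - ksIntegralIoc f G (P.x i) (P.x (i + 1))| ≤ η) := by
    intro i hi
    by_cases his : i ∈ s
    · exact ⟨_, ⟨.single _ _ _ (P.mono i hi) (P.tag_mem i hi),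
        TaggedPartition.single_isFine _ _ (hfine i his), riemannSum_single _ _⟩,
        fun _ => rfl, fun h => (h his).elim⟩
    obtain ⟨Q, hQδ, hQ⟩ := h.exists_isFine_abs_riemannSum_sub_le hδ (P.x_mem_Icc hi.le).1
      (P.mono i hi) (P.x_mem_Icc hi).2 hη
    exact ⟨riemannSum f G Q - f (P.x i) * G (P.x i), ⟨Q, hQδ, by ring⟩, fun h => (his h).elim,
      fun _ => by simpa [ksIntegralIoc] using hQ⟩
  choose! c hcQ hcs hcs' using hQ
  have hR := exists_isFine_riemannSum_eq hcQ
  rw [P.x_zero, P.x_last] at hR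
  obtain ⟨R, hRδ, hRc⟩ := hR
  exact ⟨R, c, hRδ, hRc, hcs, hcs'⟩

/-- The Saks–Henstock lemma. -/
theorem HasIntegral.abs_sum_sub_ksIntegralIoc_le (h : HasIntegral f G a b A)
    (hδ : IsGauge K a b δ)
    (hacc : ∀ P : TaggedPartition K a b, P.IsFine δ → |riemannSum f G P - A| < ε)
    (P : TaggedPartition K a b) {s : Finset ℕ} (hs : s ⊆ Finset.range P.n)
    (hfine : ∀ i ∈ s, Ioc (P.x i) (P.x (i + 1)) ⊆ δ (P.t (i + 1))) :
    |∑ i ∈ s, (f (P.t (i + 1)) * (G (P.x (i + 1)) - G (P.x i)) -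
      ksIntegralIoc f G (P.x i) (P.x (i + 1)))| ≤ ε := by
  refine le_of_forall_pos_lt_add fun η hη => ?_
  set ν := fun i => ksIntegralIoc f G (P.x i) (P.x (i + 1))
  set η' := η / (P.n + 1)
  obtain ⟨R, c, hRδ, hRc, hcs, hcs'⟩ := h.exists_isFine_refinement hδ P hfine
    (by positivity : 0 < η')
  have hsum : ∑ i ∈ s, (f (P.t (i + 1)) * (G (P.x (i + 1)) - G (P.x i)) - ν i) =
      (riemannSum f G R - A) - ∑ i ∈ Finset.range P.n \ s, (c i - ν i) := by
    have hRA : riemannSum f G R - A = ∑ i ∈ Finset.range P.n, (c i - ν i) := by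
      rw [hRc, Finset.sum_sub_distrib, h.sum_ksIntegralIoc P]
      ring
    rw [hRA, ← Finset.sum_sdiff hs, add_sub_cancel_left]
    exact Finset.sum_congr rfl fun i hi => by rw [hcs i (Finset.mem_range.1 (hs hi)) hi]
  have hrest : |∑ i ∈ Finset.range P.n \ s, (c i - ν i)| ≤ P.n * η' :=
    calc _ ≤ ∑ i ∈ Finset.range P.n \ s, η' := (Finset.abs_sum_le_sum_abs _ _).trans
          (Finset.sum_le_sum fun i hi => by
            rw [Finset.mem_sdiff, Finset.mem_range] at hi
            exact hcs' i hi.1 hi.2)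
      _ ≤ ∑ i ∈ Finset.range P.n, η' :=
          Finset.sum_le_sum_of_subset_of_nonneg Finset.sdiff_subset fun _ _ _ => by positivity
      _ = P.n * η' := by simp
  have hη' : P.n * η' < η := by
    rw [mul_div_assoc', div_lt_iff₀ (by positivity)]
    linarith
  calc _ = |(riemannSum f G R - A) - ∑ i ∈ Finset.range P.n \ s, (c i - ν i)| := by rw [← hsum]
    _ ≤ |riemannSum f G R - A| + |∑ i ∈ Finset.range P.n \ s, (c i - ν i)| := abs_sub _ _
    _ < ε + η := add_lt_add_of_lt_of_le (hacc R hRδ) (hrest.trans hη'.le)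

theorem abs_sum_sub_ksIntegralIoc_le_sum {F : ℕ → K → ℝ} {A ε : ℕ → ℝ} {δ : ℕ → K → Set K}
    (hF : ∀ k, HasIntegral (F k) G a b (A k)) (hδ : ∀ k, IsGauge K a b (δ k))
    (hacc : ∀ k, ∀ P : TaggedPartition K a b, P.IsFine (δ k) →
      |riemannSum (F k) G P - A k| < ε k)
    (m : K → ℕ) (P : TaggedPartition K a b) (hP : P.IsFine fun x => δ (m x) x) :
    |∑ i ∈ Finset.range P.n, (F (m (P.t (i + 1))) (P.t (i + 1)) * (G (P.x (i + 1)) - G (P.x i)) -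
        ksIntegralIoc (F (m (P.t (i + 1)))) G (P.x i) (P.x (i + 1)))| ≤
      ∑ k ∈ (Finset.range P.n).image fun i => m (P.t (i + 1)), ε k := by
  rw [← Finset.sum_fiberwise_of_maps_to (g := fun i => m (P.t (i + 1)))
    fun i hi => Finset.mem_image_of_mem (fun i => m (P.t (i + 1))) hi]
  refine (Finset.abs_sum_le_sum_abs _ _).trans (Finset.sum_le_sum fun k _ => ?_)
  set s := (Finset.range P.n).filter fun i => m (P.t (i + 1)) = k
  have hs : ∀ i ∈ s, i < P.n ∧ m (P.t (i + 1)) = k := fun i hi => by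
    simpa [s] using hi
  rw [Finset.sum_congr rfl fun i hi => by rw [(hs i hi).2]]
  refine (hF k).abs_sum_sub_ksIntegralIoc_le (hδ k) (hacc k) P (Finset.filter_subset _ _)
    fun i hi => ?_
  simpa [(hs i hi).2] using hP i (hs i hi).1

theorem head_add_sum_ksIntegralIoc_mono {F : ℕ → K → ℝ} {A : ℕ → ℝ} (hFmono : Monotone F)
    (hF : ∀ k, HasIntegral (F k) G a b (A k)) (hG : Monotone G) (hGa : 0 ≤ G a)
    (P : TaggedPartition K a b) {m m' : K → ℕ} (ha : m a ≤ m' a)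
    (ht : ∀ i < P.n, m (P.t (i + 1)) ≤ m' (P.t (i + 1))) :
    F (m a) a * G a +
        ∑ i ∈ Finset.range P.n, ksIntegralIoc (F (m (P.t (i + 1)))) G (P.x i) (P.x (i + 1)) ≤
      F (m' a) a * G a +
        ∑ i ∈ Finset.range P.n, ksIntegralIoc (F (m' (P.t (i + 1)))) G (P.x i) (P.x (i + 1)) := by
  gcongr with i hi
  · exact hFmono ha a
  · rw [Finset.mem_range] at hi
    exact ksIntegralIoc_mono (hFmono (ht i hi)) hG (hF _) (hF _) (P.x_mem_Icc hi.le).1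
      (P.mono i hi) (P.x_mem_Icc hi).2

end Henstock

section Convergence

variable {K : Type*} [LinearOrder K] [TopologicalSpace K] [OrderTopology K] [CompactSpace K]
  {a b : K} {G : K → ℝ}

theorem hasIntegral_of_monotone_of_tendsto {F : ℕ → K → ℝ} {A : ℕ → ℝ} {g : K → ℝ} {L : ℝ}
    (hG : Monotone G) (hGa : 0 ≤ G a) (hFmono : Monotone F)
    (hF : ∀ k, HasIntegral (F k) G a b (A k))
    (hFg : ∀ x, Tendsto (F · x) atTop (𝓝 (g x))) (hA : Tendsto A atTop (𝓝 L)) :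
    HasIntegral g G a b L := by
  refine hasIntegral_of_forall_le_mul (G b + 2) fun ε hε => ?_
  obtain ⟨k₀, hk₀⟩ := Metric.tendsto_atTop.1 hA ε hε
  choose δ hδ hacc using fun k => hF k (ε / 2 ^ (k + 1)) (by positivity)
  choose m hk₀m hm using fun x => ((eventually_ge_atTop k₀).and
    ((hFg x).eventually (Metric.closedBall_mem_nhds (g x) hε))).exists
  refine ⟨fun x => δ (m x) x, fun x hx => hδ (m x) x hx, fun P hP => ?_⟩
  set M := (Finset.range P.n).sup (fun i => m (P.t (i + 1))) ⊔ m a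
  have hgF : |riemannSum g G P - riemannSum (fun x => F (m x) x) G P| ≤ ε * G b :=
    abs_riemannSum_sub_le (fun x => by simpa [Real.dist_eq, abs_sub_comm] using hm x) hG hGa P
  have hFν := (abs_le.1 (abs_sum_sub_ksIntegralIoc_le_sum hF hδ hacc m P hP)).imp
    (fun h => (neg_le_neg (sum_div_two_pow_succ_le hε.le _)).trans h)
    (fun h => h.trans (sum_div_two_pow_succ_le hε.le _))
  -- the sum of the integrals over the cells lies between the integrals of `F k₀` and `F M`
  have hlow := head_add_sum_ksIntegralIoc_mono hFmono hF hG hGa P (m := fun _ => k₀) (hk₀m a)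
    fun i _ => hk₀m _
  have hupp := head_add_sum_ksIntegralIoc_mono hFmono hF hG hGa P (m' := fun _ => M)
    le_sup_right fun i hi =>
      (Finset.le_sup (f := fun i => m (P.t (i + 1))) (Finset.mem_range.2 hi)).trans le_sup_left
  rw [(hF k₀).sum_ksIntegralIoc P] at hlow
  rw [(hF M).sum_ksIntegralIoc P] at hupp
  have hAk₀ := abs_lt.1 (hk₀ k₀ le_rfl)
  have hAM := abs_lt.1 (hk₀ M ((hk₀m a).trans le_sup_right))
  rw [abs_le] at hgF ⊢
  simp only [riemannSum, Finset.sum_sub_distrib] at hgF hFν ⊢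
  constructor <;> linarith

end Convergence

theorem GNull.exists_weighted_cover {K : Type*} [LinearOrder K] [TopologicalSpace K]
    [MeasurableSpace K] {μ : Measure K} {N : Set K} (hN : GNull μ N) {ε : ℝ} (hε : 0 < ε) :
    ∃ I : ℕ → ℕ → Set K, (∀ k j, IsOpen (I k j) ∧ (I k j).OrdConnected) ∧
      (∀ k, N ⊆ ⋃ j, I k j) ∧ ∀ k : ℕ, μ (⋃ j, I k j) ≠ ⊤ ∧
        ((k : ℝ) + 1) * (μ (⋃ j, I k j)).toReal ≤ ε / 2 ^ (k + 1) := by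
  choose I hI hNI hIμ using fun k : ℕ => hN (ε / ((k + 1) * 2 ^ (k + 1))) (by positivity)
  refine ⟨I, hI, hNI, fun k => ?_⟩
  have h := (measure_iUnion_le _).trans (hIμ k).le
  refine ⟨ne_top_of_le_ne_top ENNReal.ofReal_ne_top h, ?_⟩
  calc _ ≤ ((k : ℝ) + 1) * (ε / ((k + 1) * 2 ^ (k + 1))) := by
        gcongr
        exact ENNReal.toReal_le_of_le_ofReal (by positivity) h
    _ = ε / 2 ^ (k + 1) := by field_simp

section Null

variable {K : Type*} [LinearOrder K] [TopologicalSpace K] [OrderClosedTopology K] [OrderBot K]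
  [MeasurableSpace K] [OpensMeasurableSpace K] {a b : K} {G : K → ℝ} {μ : Measure K}

theorem measure_Ioc_eq_ofReal_sub (hμ : ∀ x, μ (Icc ⊥ x) = ENNReal.ofReal (G x)) {u v : K}
    (hu : 0 ≤ G u) (huv : u ≤ v) : μ (Ioc u v) = ENNReal.ofReal (G v - G u) := by
  have h := measure_union (μ := μ)
    (disjoint_left.2 fun _ (hz : _ ∈ Icc ⊥ u) hz' => hz'.1.not_ge hz.2)
    (measurableSet_Ioc (a := u) (b := v))
  rw [Icc_union_Ioc_eq_Icc bot_le huv, hμ, hμ] at h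
  rw [ENNReal.ofReal_sub _ hu, h, ENNReal.add_sub_cancel_left ENNReal.ofReal_ne_top]

theorem TaggedPartition.sum_sub_le_toReal_measure
    (hμ : ∀ x, μ (Icc ⊥ x) = ENNReal.ofReal (G x)) (hG : Monotone G) (hG0 : ∀ x, 0 ≤ G x)
    (P : TaggedPartition K a b) {s : Finset ℕ} (hs : s ⊆ Finset.range P.n) {U : Set K}
    (hU : ∀ i ∈ s, Ioc (P.x i) (P.x (i + 1)) ⊆ U) (hUμ : μ U ≠ ⊤) :
    ∑ i ∈ s, (G (P.x (i + 1)) - G (P.x i)) ≤ (μ U).toReal := by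
  have hcell : ∀ i ∈ s, G (P.x (i + 1)) - G (P.x i) = (μ (Ioc (P.x i) (P.x (i + 1)))).toReal :=
    fun i hi => by
      have hi := P.mono i (Finset.mem_range.1 (hs hi))
      rw [measure_Ioc_eq_ofReal_sub hμ (hG0 _) hi, ENNReal.toReal_ofReal (sub_nonneg.2 (hG hi))]
  rw [Finset.sum_congr rfl hcell, ← ENNReal.toReal_sum
    fun i hi => ne_top_of_le_ne_top hUμ (measure_mono (hU i hi)), ← measure_biUnion_finset
    (fun i hi j hj hij => P.disjoint_Ioc (Finset.mem_range.1 (hs hi))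
      (Finset.mem_range.1 (hs hj)) hij) fun _ _ => measurableSet_Ioc]
  exact ENNReal.toReal_mono hUμ (measure_mono (iUnion₂_subset hU))

theorem TaggedPartition.sum_filter_mul_sub_le
    (hμ : ∀ x, μ (Icc ⊥ x) = ENNReal.ofReal (G x)) (hG : Monotone G) (hG0 : ∀ x, 0 ≤ G x)
    (P : TaggedPartition K a b) {N : Set K} [DecidablePred (· ∈ N)] {κ : K → ℕ}
    {U : ℕ → Set K} {ε : ℝ} (hε : 0 ≤ ε) (hUμ : ∀ k, μ (U k) ≠ ⊤)
    (hUε : ∀ k : ℕ, ((k : ℝ) + 1) * (μ (U k)).toReal ≤ ε / 2 ^ (k + 1))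
    (hU : ∀ i < P.n, P.t (i + 1) ∈ N → Ioc (P.x i) (P.x (i + 1)) ⊆ U (κ (P.t (i + 1)))) :
    ∑ i ∈ (Finset.range P.n).filter (fun i => P.t (i + 1) ∈ N),
      ((κ (P.t (i + 1)) : ℝ) + 1) * (G (P.x (i + 1)) - G (P.x i)) ≤ ε := by
  set s := (Finset.range P.n).filter fun i => P.t (i + 1) ∈ N
  have hs : ∀ i ∈ s, i < P.n ∧ P.t (i + 1) ∈ N := fun i hi => by simpa [s] using hi
  rw [← Finset.sum_fiberwise_of_maps_to (g := fun i => κ (P.t (i + 1)))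
    fun i hi => Finset.mem_image_of_mem (fun i => κ (P.t (i + 1))) hi]
  refine (Finset.sum_le_sum fun k _ => ?_).trans (sum_div_two_pow_succ_le hε _)
  set t := s.filter fun i => κ (P.t (i + 1)) = k
  have ht : ∀ i ∈ t, i ∈ s ∧ κ (P.t (i + 1)) = k := fun i hi => by simpa [t] using hi
  rw [Finset.sum_congr rfl fun i hi => by rw [(ht i hi).2], ← Finset.mul_sum]
  refine le_trans ?_ (hUε k)
  gcongr
  refine P.sum_sub_le_toReal_measure hμ hG hG0
    (fun i hi => Finset.mem_range.2 (hs i (ht i hi).1).1) (fun i hi => ?_) (hUμ k)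
  obtain ⟨his, rfl⟩ := ht i hi
  exact hU i (hs i his).1 (hs i his).2

theorem hasIntegral_zero_of_null (hμ : ∀ x, μ (Icc ⊥ x) = ENNReal.ofReal (G x))
    (hG : Monotone G) (hG0 : ∀ x, 0 ≤ G x) {N : Set K} (hN : GNull μ N) {φ : K → ℝ}
    (hφ : ∀ x ∉ N, φ x = 0) (b : K) : HasIntegral φ G ⊥ b 0 := by
  classical
  refine hasIntegral_of_forall_le_mul 2 fun ε hε => ?_
  -- at `x ∈ N` the gauge is the interval of the `κ x`-th cover containing `x`, so that cells
  -- tagged with weight `k` lie in the `k`-th cover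
  obtain ⟨I, hI, hNI, hU⟩ := hN.exists_weighted_cover hε
  set κ : K → ℕ := fun x => ⌈|φ x|⌉₊
  have hκ : ∀ x, |φ x| ≤ κ x + 1 := fun x => (Nat.le_ceil _).trans (by linarith)
  choose! j hj using fun x (hx : x ∈ N) => mem_iUnion.1 (hNI (κ x) hx)
  refine ⟨fun x => if x ∈ N then I (κ x) (j x) ∩ Icc ⊥ b else Icc ⊥ b, fun x hx => ?_,
    fun P hP => ?_⟩
  · dsimp only
    split_ifs with hxN
    · exact ⟨⟨hj x hxN, hx⟩, (hI _ _).2.inter ordConnected_Icc, _, (hI _ _).1, rfl⟩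
    · exact isGauge_Icc x hx
  have hhead : |φ ⊥| * G ⊥ ≤ ε := by
    by_cases h : ⊥ ∈ N
    · have hGbot : G ⊥ ≤ (μ (⋃ j, I (κ ⊥) j)).toReal := by
        rw [← ENNReal.toReal_ofReal (hG0 ⊥), ← hμ, Icc_self]
        exact ENNReal.toReal_mono (hU _).1
          (measure_mono (singleton_subset_iff.2 (mem_iUnion.2 ⟨_, hj ⊥ h⟩)))
      calc |φ ⊥| * G ⊥ ≤ (κ ⊥ + 1) * (μ (⋃ j, I (κ ⊥) j)).toReal :=
          mul_le_mul (hκ ⊥) hGbot (hG0 ⊥) (by positivity)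
        _ ≤ ε / 2 ^ (κ ⊥ + 1) := (hU _).2
        _ ≤ ε := div_le_self hε.le (one_le_pow₀ one_le_two)
    · simp [hφ ⊥ h, hε.le]
  have htags : ∑ i ∈ Finset.range P.n, |φ (P.t (i + 1))| * (G (P.x (i + 1)) - G (P.x i)) ≤ ε := by
    rw [← Finset.sum_filter_of_ne (p := fun i => P.t (i + 1) ∈ N) fun i _ h => by
      by_contra hi
      simp [hφ _ hi] at h]
    refine le_trans ?_ (P.sum_filter_mul_sub_le (N := N) (κ := κ) hμ hG hG0 hε.le
      (fun k => (hU k).1) (fun k => (hU k).2) fun i hi hiN => ?_)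
    · refine Finset.sum_le_sum fun i hi => ?_
      have := P.mono i (Finset.mem_range.1 (Finset.mem_filter.1 hi).1)
      gcongr
      · exact sub_nonneg.2 (hG this)
      · exact hκ _
    · have := hP i hi
      simp only [if_pos hiN] at this
      exact this.trans (inter_subset_left.trans (subset_iUnion _ _))
  rw [sub_zero, two_mul]
  exact (abs_riemannSum_le hG (hG0 ⊥) P).trans (add_le_add hhead htags)

theorem HasIntegral.congr_null (hμ : ∀ x, μ (Icc ⊥ x) = ENNReal.ofReal (G x))
    (hG : Monotone G) (hG0 : ∀ x, 0 ≤ G x) {f f' : K → ℝ} {A : ℝ} (h : HasIntegral f G ⊥ b A)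
    {N : Set K} (hN : GNull μ N) (hff' : ∀ x ∉ N, f x = f' x) : HasIntegral f' G ⊥ b A := by
  simpa using h.add (hasIntegral_zero_of_null hμ hG hG0 hN (φ := f' - f)
    (fun x hx => sub_eq_zero.2 (hff' x hx).symm) b)

end Null

section MonotoneConvergence

variable {K : Type*} [LinearOrder K] [TopologicalSpace K] [OrderTopology K] [CompactSpace K]
  [OrderBot K] [MeasurableSpace K] [OpensMeasurableSpace K] {b : K} {G : K → ℝ} {μ : Measure K}

theorem hasIntegral_of_monotone_of_tendsto_of_null
    (hμ : ∀ x, μ (Icc ⊥ x) = ENNReal.ofReal (G x)) (hG : Monotone G) (hG0 : ∀ x, 0 ≤ G x)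
    {F : ℕ → K → ℝ} {A : ℕ → ℝ} {g : K → ℝ} {L : ℝ} (hFmono : Monotone F)
    (hF : ∀ k, HasIntegral (F k) G ⊥ b (A k)) {N : Set K} (hN : GNull μ N)
    (hFg : ∀ x ∉ N, Tendsto (F · x) atTop (𝓝 (g x))) (hA : Tendsto A atTop (𝓝 L)) :
    HasIntegral g G ⊥ b L := by
  have hind := hasIntegral_of_monotone_of_tendsto hG (hG0 ⊥)
    (F := fun k => Nᶜ.indicator (F k)) (g := Nᶜ.indicator g)
    (fun k l hkl x => indicator_le_indicator (hFmono hkl x))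
    (fun k => (hF k).congr_null hμ hG hG0 hN fun x hx => (indicator_of_mem hx _).symm)
    (fun x => by by_cases hx : x ∈ N <;> simp [hx, hFg]) hA
  exact hind.congr_null hμ hG hG0 hN fun x hx => indicator_of_mem hx _

end MonotoneConvergence

theorem monotone_convergence_general {K : Type*} [LinearOrder K] [TopologicalSpace K]
    [OrderTopology K] [CompactSpace K] [BoundedOrder K] [MeasurableSpace K] [BorelSpace K]
    (G : K → ℝ) (hGmono : Monotone G) (hGpos : ∀ x : K, 0 ≤ G x)
    (μ : MeasureTheory.Measure K)
    (hμ : ∀ x : K, μ (Set.Icc ⊥ x) = ENNReal.ofReal (G x))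
    (f : ℕ → K → ℝ) (A : ℕ → ℝ) (hint : ∀ m, HasIntegral (f m) G (⊥ : K) ⊤ (A m))
    (hmono : Monotone f ∨ Antitone f)
    (g : K → ℝ)
    (hconv : GNull μ {x : K | ¬ Filter.Tendsto (fun m => f m x) Filter.atTop (nhds (g x))})
    (L : ℝ) (hA : Filter.Tendsto A Filter.atTop (nhds L)) :
    HasIntegral g G (⊥ : K) ⊤ L := by
  have hfg : ∀ x ∉ {x : K | ¬ Tendsto (fun m => f m x) atTop (𝓝 (g x))},
      Tendsto (fun m => f m x) atTop (𝓝 (g x)) := fun x hx => not_not.1 hx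
  rcases hmono with hf | hf
  · exact hasIntegral_of_monotone_of_tendsto_of_null hμ hGmono hGpos hf hint hconv hfg hA
  · simpa using (hasIntegral_of_monotone_of_tendsto_of_null (g := -g) hμ hGmono hGpos hf.neg
      (fun m => (hint m).neg) hconv (fun x hx => (hfg x hx).neg) hA.neg).neg

theorem monotone_convergence {K : Type*} [LinearOrder K] [TopologicalSpace K]
    [OrderTopology K] [CompactSpace K] [BoundedOrder K] [MeasurableSpace K] [BorelSpace K]
    (G : K → ℝ) (hGmono : Monotone G) (hGpos : ∀ x : K, 0 ≤ G x) (hGam : Amenable G)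
    (μ : MeasureTheory.Measure K) [μ.Regular]
    (hμ : ∀ x : K, μ (Set.Icc ⊥ x) = ENNReal.ofReal (G x))
    (f : ℕ → K → ℝ) (A : ℕ → ℝ) (hint : ∀ m, HasIntegral (f m) G (⊥ : K) ⊤ (A m))
    (hmono : Monotone f ∨ Antitone f)
    (g : K → ℝ)
    (hconv : GNull μ {x : K | ¬ Filter.Tendsto (fun m => f m x) Filter.atTop (nhds (g x))})
    (L : ℝ) (hA : Filter.Tendsto A Filter.atTop (nhds L)) :
    HasIntegral g G (⊥ : K) ⊤ L :=
  monotone_convergence_general G hGmono hGpos μ hμ f A hint hmono g hconv L hA
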